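/- arXiv:1611.06383 — 8 statements merged into one kernel-verified Lean document; each statement's English description precedes it below -/
import Mathlib

section
/- Every real-valued approximate isometry φ from X to Y is of the form φ(x,y) = d(ι(x), η(y)) for some metric space Z and isometric embeddings ι : X → Z and η : Y → Z. -/
open scoped ENNReal

/-- A map into `[0,∞]` is Katětov if it satisfies the two Katětov inequalities. -/
def IsKatetov {M : Type*} [PseudoMetricSpace M] (f : M → ℝ≥0∞) : Prop :=
  ∀ a a' : M, f a ≤ edist a a' + f a' ∧ edist a a' ≤ f a + f a'

/-- An approximate isometry from `X` to `Y` is a map `X × Y → [0,∞]`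
which is separately Katětov in each variable. -/
def IsApproxIsometry {X Y : Type*} [PseudoMetricSpace X] [PseudoMetricSpace Y]
    (φ : X → Y → ℝ≥0∞) : Prop :=
  (∀ y : Y, IsKatetov fun x => φ x y) ∧ (∀ x : X, IsKatetov (φ x))

universe u v

private structure SumCopy (X : Type u) (Y : Type v) : Type (max u v) where
  val : X ⊕ Y

private def sumD {X : Type u} {Y : Type v} [MetricSpace X] [MetricSpace Y]
    (φ : X → Y → ℝ≥0∞) : X ⊕ Y → X ⊕ Y → ℝ≥0∞
  | .inl x, .inl x' => edist x x'
  | .inl x, .inr y => φ x y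
  | .inr y, .inl x => φ x y
  | .inr y, .inr y' => edist y y'

/-- Every real-valued approximate isometry comes from a joint embedding. -/
theorem stmt_2 {X : Type u} {Y : Type v} [MetricSpace X] [MetricSpace Y]
    (φ : X → Y → ℝ≥0∞) (hφ : IsApproxIsometry φ) (hfin : ∀ x y, φ x y ≠ ⊤) :
    ∃ (Z : Type (max u v)) (_ : MetricSpace Z) (ι : X → Z) (η : Y → Z),
      Isometry ι ∧ Isometry η ∧ ∀ x y, φ x y = edist (ι x) (η y) := by
  obtain ⟨h1, h2⟩ := hφ
  letI E : PseudoEMetricSpace (SumCopy X Y) :=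
    { edist := fun a b => sumD φ a.val b.val
      edist_self := by rintro ⟨x | y⟩ <;> simp [sumD]
      edist_comm := by rintro ⟨x | y⟩ ⟨x' | y'⟩ <;> simp [sumD, edist_comm]
      edist_triangle := by
        rintro ⟨x | y⟩ ⟨x' | y'⟩ ⟨x'' | y''⟩ <;> simp only [sumD]
        · exact edist_triangle _ _ _
        · exact (h1 y'' x x').1
        · exact (h1 y' x x'').2
        · calc φ x y'' ≤ edist y'' y' + φ x y' := (h2 x y'' y').1
            _ = φ x y' + edist y' y'' := by rw [add_comm, edist_comm]
        · calc φ x'' y ≤ edist x'' x' + φ x' y := (h1 y x'' x').1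
            _ = φ x' y + edist x' x'' := by rw [add_comm, edist_comm]
        · exact (h2 x' y y'').2
        · exact (h2 x'' y y').1
        · exact edist_triangle _ _ _ }
  letI P : PseudoMetricSpace (SumCopy X Y) := PseudoEMetricSpace.toPseudoMetricSpace (by
    rintro ⟨x | y⟩ ⟨x' | y'⟩ <;>
      (show sumD φ _ _ ≠ ⊤; simp only [sumD]) <;> first | exact edist_ne_top _ _ | exact hfin _ _)
  refine ⟨SeparationQuotient (SumCopy X Y), inferInstance,
    fun x => SeparationQuotient.mk ⟨.inl x⟩, fun y => SeparationQuotient.mk ⟨.inr y⟩, ?_, ?_, ?_⟩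
  · intro a b
    rw [SeparationQuotient.edist_mk]
    rfl
  · intro a b
    rw [SeparationQuotient.edist_mk]
    rfl
  · intro x y
    rw [SeparationQuotient.edist_mk]
    rfl
end

section
/- For real-valued approximate isometries φ and ψ from X to Y, the inequality φ ≤ ψ (pointwise) holds if and only if every joint embedding (ι, η) satisfying φ (i.e., d(ι(x),η(y)) ≤ φ(x,y) for all x, y) also satisfies ψ. -/
open scoped ENNReal

universe u v

/-- A copy of `X ⊕ Y` with no pre-existing topological instances. -/
structure SumCopy_s3 (X : Type u) (Y : Type v) : Type max u v where
  val : X ⊕ Y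

section Aux
variable {X : Type u} {Y : Type v} [MetricSpace X] [MetricSpace Y]

/-- The candidate edistance on `SumCopy X Y` induced by `φ`. -/
def sumEDist (φ : X → Y → ℝ≥0∞) : SumCopy_s3 X Y → SumCopy_s3 X Y → ℝ≥0∞
  | ⟨.inl x⟩, ⟨.inl x'⟩ => edist x x'
  | ⟨.inl x⟩, ⟨.inr y⟩ => φ x y
  | ⟨.inr y⟩, ⟨.inl x⟩ => φ x y
  | ⟨.inr y⟩, ⟨.inr y'⟩ => edist y y'

/-- The pseudo-emetric on `SumCopy X Y` induced by an approximate isometry. -/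
noncomputable def sumPseudoEMetric (φ : X → Y → ℝ≥0∞) (hφ : IsApproxIsometry φ) :
    PseudoEMetricSpace (SumCopy_s3 X Y) where
  edist := sumEDist φ
  edist_self := by rintro ⟨x | y⟩ <;> simp [sumEDist]
  edist_comm := by rintro ⟨x | y⟩ ⟨x' | y'⟩ <;> simp [sumEDist, edist_comm]
  edist_triangle := by
    rintro ⟨a | a⟩ ⟨b | b⟩ ⟨c | c⟩ <;> simp only [sumEDist]
    · exact edist_triangle _ _ _
    · exact (hφ.1 c a b).1
    · exact ((hφ.1 b a c).2).trans (le_of_eq rfl)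
    · calc φ a c ≤ edist c b + φ a b := (hφ.2 a c b).1
        _ = φ a b + edist b c := by rw [edist_comm, add_comm]
    · calc φ c a ≤ edist c b + φ b a := (hφ.1 a c b).1
        _ = φ b a + edist b c := by rw [edist_comm, add_comm]
    · exact (hφ.2 b a c).2
    · exact (hφ.2 c a b).1
    · exact edist_triangle _ _ _

end Aux

/-- For real-valued approximate isometries, `φ ≤ ψ` iff every joint embedding
satisfying `φ` also satisfies `ψ`. -/
theorem stmt_3 {X : Type u} {Y : Type v} [MetricSpace X] [MetricSpace Y]
    (φ ψ : X → Y → ℝ≥0∞) (hφ : IsApproxIsometry φ) (hψ : IsApproxIsometry ψ)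
    (hφfin : ∀ x y, φ x y ≠ ⊤) (hψfin : ∀ x y, ψ x y ≠ ⊤) :
    (∀ x y, φ x y ≤ ψ x y) ↔
      ∀ (Z : Type (max u v)) [MetricSpace Z] (ι : X → Z) (η : Y → Z),
        Isometry ι → Isometry η →
        (∀ x y, edist (ι x) (η y) ≤ φ x y) →
        (∀ x y, edist (ι x) (η y) ≤ ψ x y) := by
  constructor
  · intro h Z _ ι η _ _ hle x y
    exact (hle x y).trans (h x y)
  · intro H x y
    have hfin : ∀ p q : SumCopy_s3 X Y, sumEDist φ p q ≠ ⊤ := by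
      rintro ⟨a | a⟩ ⟨b | b⟩
      · exact edist_ne_top a b
      · exact hφfin a b
      · exact hφfin b a
      · exact edist_ne_top a b
    letI e : PseudoEMetricSpace (SumCopy_s3 X Y) := sumPseudoEMetric φ hφ
    letI m : PseudoMetricSpace (SumCopy_s3 X Y) := PseudoEMetricSpace.toPseudoMetricSpace hfin
    have hmk : ∀ p q : SumCopy_s3 X Y,
        edist (SeparationQuotient.mk p) (SeparationQuotient.mk q) = sumEDist φ p q := by
      intro p q
      rw [edist_dist, SeparationQuotient.dist_mk, ← edist_dist]; rfl
    have key := H (SeparationQuotient (SumCopy_s3 X Y))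
      (fun x => SeparationQuotient.mk ⟨Sum.inl x⟩)
      (fun y => SeparationQuotient.mk ⟨Sum.inr y⟩)
      (fun a b => by rw [hmk]; rfl)
      (fun a b => by rw [hmk]; rfl)
      (fun a b => by rw [hmk]; exact le_refl (φ a b))
    have := key x y
    rwa [hmk] at this
end

section
/- Let X' ⊆ X and Y' ⊆ Y be subspaces with inclusion maps ι, η, and let ψ be an approximate isometry from X' to Y'. The trivial extension ψ|^{X×Y} := φ_η ψ φ_ι* is the largest approximate isometry from X to Y whose restriction to X' × Y' equals ψ; moreover, an approximate isometry θ from X to Y satisfies θ ≤ ψ|^{X×Y} if and only if θ|_{X'×Y'} ≤ ψ. -/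
open scoped ENNReal

private lemma aux_mono {ι κ : Sort*} {f g : ι → κ → ℝ≥0∞} {c : ℝ≥0∞}
    (h : ∀ i j, f i j ≤ c + g i j) : (⨅ i, ⨅ j, f i j) ≤ c + ⨅ i, ⨅ j, g i j := by
  rw [ENNReal.add_iInf]; refine le_iInf fun i => ?_
  rw [ENNReal.add_iInf]; refine le_iInf fun j => ?_
  exact iInf_le_of_le i (iInf_le_of_le j (h i j))

private lemma le_add_iInf4 {ι κ : Sort*} {f g : ι → κ → ℝ≥0∞} {c : ℝ≥0∞}
    (h : ∀ i j i' j', c ≤ f i j + g i' j') :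
    c ≤ (⨅ i, ⨅ j, f i j) + (⨅ i, ⨅ j, g i j) := by
  rw [ENNReal.iInf_add]; refine le_iInf fun i => ?_
  rw [ENNReal.iInf_add]; refine le_iInf fun j => ?_
  rw [ENNReal.add_iInf]; refine le_iInf fun i' => ?_
  rw [ENNReal.add_iInf]; refine le_iInf fun j' => ?_
  exact h i j i' j'

/-- The trivial extension of an approximate isometry between subspaces is the largest
approximate isometry restricting to it; `θ ≤ ψ|^{X×Y}` iff `θ|_{X'×Y'} ≤ ψ`. -/
theorem stmt_8 {X Y : Type*} [MetricSpace X] [MetricSpace Y] (X' : Set X) (Y' : Set Y)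
    (ψ : X' → Y' → ℝ≥0∞) (hψ : IsApproxIsometry ψ) :
    let ext : X → Y → ℝ≥0∞ := fun x y =>
      ⨅ (x' : X') (y' : Y'), (edist x (x' : X) + ψ x' y' + edist ((y' : Y)) y)
    IsApproxIsometry ext ∧
      (∀ (x' : X') (y' : Y'), ext x' y' = ψ x' y') ∧
      (∀ θ : X → Y → ℝ≥0∞, IsApproxIsometry θ →
        ((∀ x y, θ x y ≤ ext x y) ↔ ∀ (x' : X') (y' : Y'), θ x' y' ≤ ψ x' y')) := by
  intro ext
  -- the key cross inequality
  have key : ∀ (a : X') (b : Y') (c : X') (d : Y'),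
      edist (a : X) (c : X) ≤ ψ a b + edist (b : Y) (d : Y) + ψ c d := by
    intro a b c d
    have h1 : edist (a : X) (c : X) ≤ ψ a d + ψ c d := (hψ.1 d a c).2
    have h2 : ψ a d ≤ edist (b : Y) (d : Y) + ψ a b := by
      have : ψ a d ≤ edist (d : Y) (b : Y) + ψ a b := ((hψ.2 a) d b).1
      rwa [edist_comm] at this
    calc edist (a : X) (c : X) ≤ ψ a d + ψ c d := h1
      _ ≤ (edist (b : Y) (d : Y) + ψ a b) + ψ c d := by gcongr
      _ = ψ a b + edist (b : Y) (d : Y) + ψ c d := by ring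
  have hrestrict : ∀ (x' : X') (y' : Y'), ext x' y' = ψ x' y' := by
    intro a b
    apply le_antisymm
    · have : ext (a : X) (b : Y) ≤ edist (a : X) (a : X) + ψ a b + edist (b : Y) (b : Y) :=
        iInf_le_of_le a (iInf_le_of_le b le_rfl)
      simpa using this
    · refine le_iInf fun x' => le_iInf fun y' => ?_
      have h1 : ψ a b ≤ edist (a : X) (x' : X) + ψ x' b := (hψ.1 b a x').1
      have h2 : ψ x' b ≤ edist (b : Y) (y' : Y) + ψ x' y' := ((hψ.2 x') b y').1
      calc ψ a b ≤ edist (a : X) (x' : X) + ψ x' b := h1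
        _ ≤ edist (a : X) (x' : X) + (edist (b : Y) (y' : Y) + ψ x' y') := by gcongr
        _ = edist (a : X) (x' : X) + ψ x' y' + edist ((y' : Y)) (b : Y) := by
            rw [edist_comm (b : Y)]; ring
  have hAI : IsApproxIsometry ext := by
    constructor
    · intro y x a
      constructor
      · show ext x y ≤ edist x a + ext a y
        refine aux_mono fun x' y' => ?_
        calc edist x (x' : X) + ψ x' y' + edist ((y' : Y)) y
            ≤ (edist x a + edist a (x' : X)) + ψ x' y' + edist ((y' : Y)) y := by
              gcongr; exact edist_triangle _ _ _
          _ = edist x a + (edist a (x' : X) + ψ x' y' + edist ((y' : Y)) y) := by ring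
      · show edist x a ≤ ext x y + ext a y
        refine le_add_iInf4 fun x' y' x'' y'' => ?_
        calc edist x a ≤ edist x (x' : X) + edist (x' : X) (x'' : X) + edist (x'' : X) a := by
              calc edist x a ≤ edist x (x'' : X) + edist (x'' : X) a := edist_triangle _ _ _
                _ ≤ (edist x (x' : X) + edist (x' : X) (x'' : X)) + edist (x'' : X) a := by
                    gcongr; exact edist_triangle _ _ _
          _ ≤ edist x (x' : X) + (ψ x' y' + edist ((y' : Y)) ((y'' : Y)) + ψ x'' y'')
                + edist (x'' : X) a := by
              gcongr; exact key x' y' x'' y''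
          _ ≤ edist x (x' : X) + (ψ x' y' + (edist ((y' : Y)) y + edist y ((y'' : Y))) + ψ x'' y'')
                + edist (x'' : X) a := by gcongr; exact edist_triangle _ _ _
          _ = edist x (x' : X) + ψ x' y' + edist ((y' : Y)) y
                + (edist a (x'' : X) + ψ x'' y'' + edist ((y'' : Y)) y) := by
              rw [edist_comm (x'' : X) a, edist_comm y ((y'' : Y))]; ring
    · intro x y b
      constructor
      · show ext x y ≤ edist y b + ext x b
        refine aux_mono fun x' y' => ?_
        calc edist x (x' : X) + ψ x' y' + edist ((y' : Y)) y
            ≤ edist x (x' : X) + ψ x' y' + (edist ((y' : Y)) b + edist b y) := by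
              gcongr; exact edist_triangle _ _ _
          _ = edist y b + (edist x (x' : X) + ψ x' y' + edist ((y' : Y)) b) := by
              rw [edist_comm b y]; ring
      · show edist y b ≤ ext x y + ext x b
        refine le_add_iInf4 fun x' y' x'' y'' => ?_
        have hyy : edist ((y' : Y)) ((y'' : Y)) ≤ ψ x' y' + ψ x' y'' := ((hψ.2 x') y' y'').2
        have hx : ψ x' y'' ≤ edist (x' : X) (x'' : X) + ψ x'' y'' := (hψ.1 y'' x' x'').1
        calc edist y b ≤ edist y ((y' : Y)) + edist ((y' : Y)) ((y'' : Y)) + edist ((y'' : Y)) b := by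
              calc edist y b ≤ edist y ((y'' : Y)) + edist ((y'' : Y)) b := edist_triangle _ _ _
                _ ≤ (edist y ((y' : Y)) + edist ((y' : Y)) ((y'' : Y))) + edist ((y'' : Y)) b := by
                    gcongr; exact edist_triangle _ _ _
          _ ≤ edist y ((y' : Y)) + (ψ x' y' + ψ x' y'') + edist ((y'' : Y)) b := by gcongr
          _ ≤ edist y ((y' : Y)) + (ψ x' y' + (edist (x' : X) (x'' : X) + ψ x'' y''))
                + edist ((y'' : Y)) b := by gcongr
          _ ≤ edist y ((y' : Y)) + (ψ x' y' + ((edist (x' : X) x + edist x (x'' : X)) + ψ x'' y''))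
                + edist ((y'' : Y)) b := by gcongr; exact edist_triangle _ _ _
          _ = edist x (x' : X) + ψ x' y' + edist ((y' : Y)) y
                + (edist x (x'' : X) + ψ x'' y'' + edist ((y'' : Y)) b) := by
              rw [edist_comm (x' : X) x, edist_comm y ((y' : Y))]; ring
  refine ⟨hAI, hrestrict, ?_⟩
  intro θ hθ
  constructor
  · intro h x' y'
    have := h (x' : X) (y' : Y)
    rwa [hrestrict x' y'] at this
  · intro h x y
    refine le_iInf fun x' => le_iInf fun y' => ?_
    calc θ x y ≤ edist x (x' : X) + θ (x' : X) y := (hθ.1 y x (x' : X)).1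
      _ ≤ edist x (x' : X) + (edist y ((y' : Y)) + θ (x' : X) (y' : Y)) := by
          gcongr; exact ((hθ.2 (x' : X)) y (y' : Y)).1
      _ ≤ edist x (x' : X) + (edist y ((y' : Y)) + ψ x' y') := by gcongr; exact h x' y'
      _ = edist x (x' : X) + ψ x' y' + edist ((y' : Y)) y := by rw [edist_comm y]; ring
end

section
/- An approximate isometry φ from X to Y is ε-total if and only if every joint embedding (ι, η) satisfying φ has the property that d(ι(x), η[Y]) ≤ ε for every x ∈ X. -/
open scoped ENNReal

universe u v

/-- `φ` is `ε`-total if `φ*φ ≤ φ_{id_X} + 2ε`. -/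
def IsEpsTotal {X Y : Type*} [PseudoMetricSpace X] [PseudoMetricSpace Y]
    (φ : X → Y → ℝ≥0∞) (ε : ℝ) : Prop :=
  ∀ x x' : X, (⨅ y : Y, (φ x y + φ x' y)) ≤ edist x x' + ENNReal.ofReal (2 * ε)

section AuxGlue

variable {X : Type u} {Y : Type v} [MetricSpace X] [MetricSpace Y]

/-- A synonym of `X ⊕ Y` carrying no pre-existing instances. -/
def GlueSpace (X : Type u) (Y : Type v) : Type (max u v) := X ⊕ Y

/-- The glued distance on `X ⊕ Y` induced by `φ`. -/
def glueD (φ : X → Y → ℝ≥0∞) : X ⊕ Y → X ⊕ Y → ℝ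
  | .inl x, .inl x' => dist x x'
  | .inl x, .inr y => (φ x y).toReal
  | .inr y, .inl x => (φ x y).toReal
  | .inr y, .inr y' => dist y y'

/-- The glued pseudometric on `X ⊕ Y` induced by a finite approximate isometry. -/
def gluePseudo (φ : X → Y → ℝ≥0∞) (hφ : IsApproxIsometry φ)
    (hfin : ∀ a b, φ a b ≠ ⊤) : PseudoMetricSpace (GlueSpace X Y) where
  dist := glueD φ
  dist_self p := by cases p <;> simp [glueD]
  dist_comm p q := by cases p <;> cases q <;> simp [glueD, dist_comm]
  dist_triangle p q r := by
    have hA : ∀ (a a' : X) (b : Y), (φ a b).toReal ≤ dist a a' + (φ a' b).toReal := by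
      intro a a' b
      have h2 := ENNReal.toReal_mono
        (ENNReal.add_ne_top.2 ⟨edist_ne_top a a', hfin a' b⟩) (hφ.1 b a a').1
      rwa [ENNReal.toReal_add (edist_ne_top a a') (hfin a' b), ← dist_edist] at h2
    have hB : ∀ (a a' : X) (b : Y), dist a a' ≤ (φ a b).toReal + (φ a' b).toReal := by
      intro a a' b
      have h2 := ENNReal.toReal_mono
        (ENNReal.add_ne_top.2 ⟨hfin a b, hfin a' b⟩) (hφ.1 b a a').2
      rwa [ENNReal.toReal_add (hfin a b) (hfin a' b), ← dist_edist] at h2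
    have hC : ∀ (a : X) (b b' : Y), (φ a b).toReal ≤ dist b b' + (φ a b').toReal := by
      intro a b b'
      have h2 := ENNReal.toReal_mono
        (ENNReal.add_ne_top.2 ⟨edist_ne_top b b', hfin a b'⟩) (hφ.2 a b b').1
      rwa [ENNReal.toReal_add (edist_ne_top b b') (hfin a b'), ← dist_edist] at h2
    have hD : ∀ (a : X) (b b' : Y), dist b b' ≤ (φ a b).toReal + (φ a b').toReal := by
      intro a b b'
      have h2 := ENNReal.toReal_mono
        (ENNReal.add_ne_top.2 ⟨hfin a b, hfin a b'⟩) (hφ.2 a b b').2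
      rwa [ENNReal.toReal_add (hfin a b) (hfin a b'), ← dist_edist] at h2
    rcases p with a | b <;> rcases q with a' | b' <;> rcases r with a'' | b''
    · exact dist_triangle a a' a''
    · exact hA a a' b''
    · exact hB a a'' b'
    · have h1 := hC a b'' b'
      rw [dist_comm b'' b'] at h1
      simp only [glueD]; linarith
    · have h1 := hA a'' a' b
      rw [dist_comm a'' a'] at h1
      simp only [glueD]; linarith
    · exact hD a' b b''
    · exact hC a'' b b'
    · exact dist_triangle b b' b''

end AuxGlue

/-- `φ` is `ε`-total iff every joint embedding satisfying `φ` has the property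
that `d(ι(x), η[Y]) ≤ ε` for every `x`. -/
theorem stmt_10 {X : Type u} {Y : Type v} [MetricSpace X] [MetricSpace Y]
    (φ : X → Y → ℝ≥0∞) (hφ : IsApproxIsometry φ) (ε : ℝ) (hε : 0 ≤ ε) :
    IsEpsTotal φ ε ↔
      ∀ (Z : Type (max u v)) [MetricSpace Z] (ι : X → Z) (η : Y → Z),
        Isometry ι → Isometry η →
        (∀ x y, edist (ι x) (η y) ≤ φ x y) →
        ∀ x, (⨅ y : Y, edist (ι x) (η y)) ≤ ENNReal.ofReal ε := by
  constructor
  · intro H Z _ ι η hι hη hsat x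
    have h := H x x
    rw [edist_self, zero_add] at h
    have h2 : (⨅ y : Y, (edist (ι x) (η y) + edist (ι x) (η y))) ≤ ENNReal.ofReal (2 * ε) :=
      le_trans (iInf_mono fun y => add_le_add (hsat x y) (hsat x y)) h
    have h3 : 2 * (⨅ y : Y, edist (ι x) (η y)) ≤ 2 * ENNReal.ofReal ε := by
      rw [ENNReal.mul_iInf_of_ne two_ne_zero ENNReal.ofNat_ne_top]
      calc (⨅ y : Y, 2 * edist (ι x) (η y))
          = ⨅ y : Y, (edist (ι x) (η y) + edist (ι x) (η y)) :=
            iInf_congr fun y => (two_mul _)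
        _ ≤ ENNReal.ofReal (2 * ε) := h2
        _ = 2 * ENNReal.ofReal ε := by
            rw [ENNReal.ofReal_mul (by norm_num : (0:ℝ) ≤ 2)]
            norm_num
    exact (ENNReal.mul_le_mul_iff_right two_ne_zero ENNReal.ofNat_ne_top).mp h3
  · intro h x x'
    by_cases hfin : ∀ a b, φ a b ≠ ⊤
    · letI := gluePseudo φ hφ hfin
      set ι : X → SeparationQuotient (GlueSpace X Y) := fun a => SeparationQuotient.mk (Sum.inl a : GlueSpace X Y) with hι
      set η : Y → SeparationQuotient (GlueSpace X Y) := fun b => SeparationQuotient.mk (Sum.inr b : GlueSpace X Y) with hη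
      have hdist : ∀ (a : X) (b : Y), edist (ι a) (η b) = φ a b := by
        intro a b
        rw [edist_dist, show dist (ι a) (η b) = @dist (GlueSpace X Y) _ (Sum.inl a) (Sum.inr b) from SeparationQuotient.dist_mk _ _]
        show ENNReal.ofReal (glueD φ (.inl a) (.inr b)) = φ a b
        simp only [glueD]
        exact ENNReal.ofReal_toReal (hfin a b)
      have key := h (SeparationQuotient (GlueSpace X Y)) ι η
        (Isometry.of_dist_eq fun a a' => by rw [show dist (ι a) (ι a') = @dist (GlueSpace X Y) _ (Sum.inl a) (Sum.inl a') from SeparationQuotient.dist_mk _ _]; rfl)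
        (Isometry.of_dist_eq fun b b' => by rw [show dist (η b) (η b') = @dist (GlueSpace X Y) _ (Sum.inr b) (Sum.inr b') from SeparationQuotient.dist_mk _ _]; rfl)
        (fun a b => (hdist a b).le) x
      have key' : (⨅ y : Y, φ x y) ≤ ENNReal.ofReal ε := by
        rwa [iInf_congr fun b => hdist x b] at key
      calc (⨅ y : Y, (φ x y + φ x' y))
          ≤ ⨅ y : Y, (edist x x' + (φ x y + φ x y)) := by
            refine iInf_mono fun y => ?_
            have h1 := (hφ.1 y x' x).1
            calc φ x y + φ x' y ≤ φ x y + (edist x' x + φ x y) := add_le_add_right h1 _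
              _ = edist x x' + (φ x y + φ x y) := by rw [edist_comm]; ring
        _ = edist x x' + ⨅ y : Y, (φ x y + φ x y) := ENNReal.add_iInf.symm
        _ ≤ edist x x' + ENNReal.ofReal (2 * ε) := by
            refine add_le_add_right ?_ _
            calc (⨅ y : Y, (φ x y + φ x y)) = ⨅ y : Y, 2 * φ x y :=
                  iInf_congr fun y => (two_mul _).symm
              _ = 2 * ⨅ y : Y, φ x y :=
                  (ENNReal.mul_iInf_of_ne two_ne_zero ENNReal.ofNat_ne_top).symm
              _ ≤ 2 * ENNReal.ofReal ε := mul_le_mul_right key' _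
              _ = ENNReal.ofReal (2 * ε) := by
                  rw [ENNReal.ofReal_mul (by norm_num : (0:ℝ) ≤ 2)]; norm_num
    · push_neg at hfin
      obtain ⟨x₀, y₀, hx₀⟩ := hfin
      have hAll : ∀ a b, φ a b = ⊤ := by
        intro a b
        have h1 : φ a y₀ = ⊤ := by
          have hle : φ x₀ y₀ ≤ edist x₀ a + φ a y₀ := (hφ.1 y₀ x₀ a).1
          rw [hx₀] at hle
          by_contra hne
          exact ENNReal.add_ne_top.2 ⟨edist_ne_top x₀ a, hne⟩ (top_le_iff.1 hle)
        have hle := (hφ.2 a y₀ b).1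
        rw [h1] at hle
        by_contra hne
        exact ENNReal.add_ne_top.2 ⟨edist_ne_top y₀ b, hne⟩ (top_le_iff.1 hle)
      set ψ : X → Y → ℝ≥0∞ :=
        fun a b => edist a x + ENNReal.ofReal (ε + 1) + edist y₀ b with hψ
      have hx1 : ∀ a b, edist a x ≤ ψ a b := fun a b =>
        le_add_right (le_add_right le_rfl)
      have hy1 : ∀ a b, edist y₀ b ≤ ψ a b := fun a b => le_add_left le_rfl
      have hψiso : IsApproxIsometry ψ := by
        refine ⟨fun b a a' => ⟨?_, ?_⟩, fun a b b' => ⟨?_, ?_⟩⟩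
        · show ψ a b ≤ edist a a' + ψ a' b
          simp only [hψ]
          calc edist a x + ENNReal.ofReal (ε + 1) + edist y₀ b
              ≤ (edist a a' + edist a' x) + ENNReal.ofReal (ε + 1) + edist y₀ b := by
                gcongr; exact edist_triangle a a' x
            _ = edist a a' + (edist a' x + ENNReal.ofReal (ε + 1) + edist y₀ b) := by ring
        · show edist a a' ≤ ψ a b + ψ a' b
          calc edist a a' ≤ edist a x + edist x a' := edist_triangle a x a'
            _ = edist a x + edist a' x := by rw [edist_comm x a']
            _ ≤ ψ a b + ψ a' b := add_le_add (hx1 a b) (hx1 a' b)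
        · show ψ a b ≤ edist b b' + ψ a b'
          simp only [hψ]
          calc edist a x + ENNReal.ofReal (ε + 1) + edist y₀ b
              ≤ edist a x + ENNReal.ofReal (ε + 1) + (edist y₀ b' + edist b' b) := by
                gcongr; exact edist_triangle y₀ b' b
            _ = edist b b' + (edist a x + ENNReal.ofReal (ε + 1) + edist y₀ b') := by
                rw [edist_comm b b']; ring
        · show edist b b' ≤ ψ a b + ψ a b'
          calc edist b b' ≤ edist b y₀ + edist y₀ b' := edist_triangle b y₀ b'
            _ = edist y₀ b + edist y₀ b' := by rw [edist_comm b y₀]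
            _ ≤ ψ a b + ψ a b' := add_le_add (hy1 a b) (hy1 a b')
      have hψfin : ∀ a b, ψ a b ≠ ⊤ := by
        intro a b
        simp only [hψ, ne_eq, ENNReal.add_eq_top, edist_ne_top, ENNReal.ofReal_ne_top,
          or_self, not_false_eq_true]
      letI := gluePseudo ψ hψiso hψfin
      set ι : X → SeparationQuotient (GlueSpace X Y) := fun a => SeparationQuotient.mk (Sum.inl a : GlueSpace X Y) with hι
      set η : Y → SeparationQuotient (GlueSpace X Y) := fun b => SeparationQuotient.mk (Sum.inr b : GlueSpace X Y) with hη
      have hdist : ∀ (a : X) (b : Y), edist (ι a) (η b) = ψ a b := by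
        intro a b
        rw [edist_dist, show dist (ι a) (η b) = @dist (GlueSpace X Y) _ (Sum.inl a) (Sum.inr b) from SeparationQuotient.dist_mk _ _]
        show ENNReal.ofReal (glueD ψ (.inl a) (.inr b)) = ψ a b
        simp only [glueD]
        exact ENNReal.ofReal_toReal (hψfin a b)
      have key := h (SeparationQuotient (GlueSpace X Y)) ι η
        (Isometry.of_dist_eq fun a a' => by rw [show dist (ι a) (ι a') = @dist (GlueSpace X Y) _ (Sum.inl a) (Sum.inl a') from SeparationQuotient.dist_mk _ _]; rfl)
        (Isometry.of_dist_eq fun b b' => by rw [show dist (η b) (η b') = @dist (GlueSpace X Y) _ (Sum.inr b) (Sum.inr b') from SeparationQuotient.dist_mk _ _]; rfl)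
        (fun a b => by rw [hAll a b]; exact le_top) x
      exfalso
      have hlow : ENNReal.ofReal (ε + 1) ≤ ⨅ y : Y, edist (ι x) (η y) := by
        refine le_iInf fun b => ?_
        rw [hdist x b, hψ]
        calc ENNReal.ofReal (ε + 1)
            ≤ edist x x + ENNReal.ofReal (ε + 1) + edist y₀ b :=
              le_add_right (le_add_left le_rfl)
          _ = _ := rfl
      have hcon : ENNReal.ofReal (ε + 1) ≤ ENNReal.ofReal ε := hlow.trans key
      rw [ENNReal.ofReal_le_ofReal_iff hε] at hcon
      linarith
end

section
/- If Y is a complete metric space and φ is an approximate isometry from X to Y that is ε-total for every ε > 0, then there is a unique isometric embedding ι : X → Y with φ(x,y) = d(ι(x), y) for all x ∈ X, y ∈ Y. -/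
open scoped ENNReal

/-- If `Y` is complete and `φ` is `ε`-total for every `ε > 0`, then `φ = φ_ι`
for a unique isometric embedding `ι : X → Y`. -/
theorem stmt_11 {X Y : Type*} [MetricSpace X] [MetricSpace Y] [CompleteSpace Y]
    (φ : X → Y → ℝ≥0∞) (hφ : IsApproxIsometry φ)
    (htot : ∀ ε : ℝ, 0 < ε → IsEpsTotal φ ε) :
    ∃! ι : X → Y, Isometry ι ∧ ∀ x y, φ x y = edist (ι x) y := by
  have key : ∀ x : X, ∃ l : Y, φ x l = 0 := by
    intro x
    have hsel : ∀ n : ℕ, ∃ y : Y, φ x y < 2⁻¹ ^ n := by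
      intro n
      have h := htot ((1/2)^n/4) (by positivity) x x
      have hhalf : ENNReal.ofReal ((1/2 : ℝ)) = 2⁻¹ := by
        rw [ENNReal.ofReal_div_of_pos two_pos]; simp
      have hpow : (2⁻¹ : ℝ≥0∞) ^ n = ENNReal.ofReal ((1/2 : ℝ)^n) := by
        rw [ENNReal.ofReal_pow (by norm_num : (0:ℝ) ≤ 1/2), hhalf]
      have hlt : (⨅ y : Y, (φ x y + φ x y)) < 2⁻¹ ^ n := by
        refine h.trans_lt ?_
        rw [edist_self, zero_add, hpow]
        exact ENNReal.ofReal_lt_ofReal_iff (by positivity) |>.mpr (by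
          rw [show (2 : ℝ) * ((1/2)^n/4) = (1/2)^n / 2 by ring]
          have : (0:ℝ) < (1/2:ℝ)^n := by positivity
          linarith)
      obtain ⟨y, hy⟩ := iInf_lt_iff.mp hlt
      exact ⟨y, lt_of_le_of_lt le_self_add hy⟩
    choose y hy using hsel
    have hcauchy : CauchySeq y := by
      refine cauchySeq_of_edist_le_geometric 2⁻¹ 2 (by norm_num) (by norm_num) fun n => ?_
      have h1 := ((hφ.2 x) (y n) (y (n+1))).2
      have h2 : φ x (y n) + φ x (y (n+1)) ≤ 2⁻¹^n + 2⁻¹^(n+1) :=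
        add_le_add (hy n).le (hy (n+1)).le
      refine h1.trans (h2.trans ?_)
      have : (2⁻¹ : ℝ≥0∞)^(n+1) ≤ 2⁻¹^n := by
        rw [pow_succ]
        exact mul_le_of_le_one_right zero_le (by norm_num)
      calc (2⁻¹:ℝ≥0∞)^n + 2⁻¹^(n+1) ≤ 2⁻¹^n + 2⁻¹^n := add_le_add le_rfl this
        _ = 2 * 2⁻¹^n := (two_mul _).symm
    obtain ⟨l, hl⟩ := cauchySeq_tendsto_of_complete hcauchy
    refine ⟨l, le_antisymm ?_ zero_le⟩
    have h1 : Filter.Tendsto (fun n => edist l (y n) + 2⁻¹^n)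
        Filter.atTop (nhds 0) := by
      have ha : Filter.Tendsto (fun n => edist l (y n)) Filter.atTop (nhds 0) := by
        have := (tendsto_const_nhds : Filter.Tendsto (fun _ : ℕ => l) Filter.atTop (nhds l)).edist hl
        simpa using this
      have hb : Filter.Tendsto (fun n : ℕ => (2⁻¹:ℝ≥0∞)^n) Filter.atTop (nhds 0) :=
        ENNReal.tendsto_pow_atTop_nhds_zero_of_lt_one (by norm_num)
      simpa using ha.add hb
    refine ge_of_tendsto' h1 fun n => ?_
    exact ((hφ.2 x) l (y n)).1.trans (add_le_add le_rfl (hy n).le)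
  choose ι hι using key
  have himg : ∀ x y, φ x y = edist (ι x) y := by
    intro x y
    refine le_antisymm ?_ ?_
    · have := ((hφ.2 x) y (ι x)).1
      rw [hι x, add_zero, edist_comm] at this
      exact this
    · have := ((hφ.2 x) (ι x) y).2
      rwa [hι x, zero_add] at this
  refine ⟨ι, ⟨fun x x' => ?_, himg⟩, ?_⟩
  · refine le_antisymm ?_ ?_
    · have := (((hφ.1 (ι x')) x x').1)
      simp only [himg, edist_self, add_zero] at this
      exact this
    · have := (((hφ.1 (ι x')) x x').2)
      simp only [himg, edist_self, add_zero] at this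
      exact this
  · rintro ι' ⟨-, h'⟩
    funext x
    have h0 : edist (ι' x) (ι x) = 0 := by rw [← h' x (ι x), hι x]
    exact edist_eq_zero.mp h0
end

section
/- Let X, Y be metric spaces, X₀, X₀' ⊆ X and Y₀, Y₀' ⊆ Y finite subsets, and ε > 0. If X₀' is contained in the ε/5-neighborhood of X₀ and Y₀' in the ε/5-neighborhood of Y₀, then for any approximate isometry φ from X to Y, the trivial extension of φ|_{X₀×Y₀} plus ε/5 is at most the trivial extension of φ|_{X₀'×Y₀'} plus ε, i.e., for all x ∈ X, y ∈ Y: inf_{x₀∈X₀, y₀∈Y₀}(d(x,x₀) + φ(x₀,y₀) + d(y₀,y)) + ε/5 ≤ inf_{x'∈X₀', y'∈Y₀'}(d(x,x') + φ(x',y') + d(y',y)) + ε. -/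
open scoped ENNReal

/-- Perturbation lemma for trivial extensions of restrictions to finite subsets. -/
theorem stmt_12 {X Y : Type*} [MetricSpace X] [MetricSpace Y]
    (X₀ X₀' : Set X) (Y₀ Y₀' : Set Y)
    (hX₀ : X₀.Finite) (hX₀' : X₀'.Finite) (hY₀ : Y₀.Finite) (hY₀' : Y₀'.Finite)
    (ε : ℝ) (hε : 0 < ε)
    (hX : ∀ x' ∈ X₀', ∃ x ∈ X₀, dist x' x < ε / 5)
    (hY : ∀ y' ∈ Y₀', ∃ y ∈ Y₀, dist y' y < ε / 5)
    (φ : X → Y → ℝ≥0∞) (hφ : IsApproxIsometry φ) :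
    ∀ (x : X) (y : Y),
      (⨅ (x₀ : X₀) (y₀ : Y₀), (edist x (x₀ : X) + φ x₀ y₀ + edist ((y₀ : Y)) y))
          + ENNReal.ofReal (ε / 5)
        ≤ (⨅ (x' : X₀') (y' : Y₀'), (edist x (x' : X) + φ x' y' + edist ((y' : Y)) y))
          + ENNReal.ofReal ε := by
  obtain ⟨h1, h2⟩ := hφ
  intro x y
  rcases isEmpty_or_nonempty X₀' with hE | hN
  · simp [iInf_of_empty]
  rcases isEmpty_or_nonempty Y₀' with hE | hN'
  · simp [iInf_of_empty]
  have hsum : ENNReal.ofReal ε = ENNReal.ofReal (4 * ε / 5) + ENNReal.ofReal (ε / 5) := by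
    rw [← ENNReal.ofReal_add (by linarith) (by linarith)]
    ring_nf
  rw [hsum, ← add_assoc]
  refine add_le_add ?_ le_rfl
  rw [ENNReal.iInf_add]
  refine le_iInf fun x' => ?_
  rw [ENNReal.iInf_add]
  refine le_iInf fun y' => ?_
  obtain ⟨x₀, hx₀, hdx⟩ := hX x' x'.2
  obtain ⟨y₀, hy₀, hdy⟩ := hY y' y'.2
  have hex : edist (x' : X) x₀ ≤ ENNReal.ofReal (ε / 5) := (edist_lt_ofReal.2 hdx).le
  have hey : edist (y' : Y) y₀ ≤ ENNReal.ofReal (ε / 5) := (edist_lt_ofReal.2 hdy).le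
  have step : edist x x₀ + φ x₀ y₀ + edist y₀ y
      ≤ (edist x (x' : X) + φ x' y' + edist (y' : Y) y) + ENNReal.ofReal (4 * ε / 5) := by
    have e1 : edist x x₀ ≤ edist x (x' : X) + edist (x' : X) x₀ := edist_triangle _ _ _
    have e2 : φ x₀ y₀ ≤ edist x₀ (x' : X) + φ x' y₀ := (h1 y₀ x₀ x').1
    have e3 : φ (x' : X) y₀ ≤ edist y₀ (y' : Y) + φ x' y' := (h2 x' y₀ y').1
    have e4 : edist y₀ y ≤ edist y₀ (y' : Y) + edist (y' : Y) y := edist_triangle _ _ _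
    have hex' : edist x₀ (x' : X) ≤ ENNReal.ofReal (ε / 5) := by rwa [edist_comm]
    have hey' : edist y₀ (y' : Y) ≤ ENNReal.ofReal (ε / 5) := by rwa [edist_comm]
    have hc : ENNReal.ofReal (ε/5) + ENNReal.ofReal (ε/5) + ENNReal.ofReal (ε/5)
        + ENNReal.ofReal (ε/5) = ENNReal.ofReal (4 * ε / 5) := by
      rw [← ENNReal.ofReal_add (by linarith) (by linarith),
        ← ENNReal.ofReal_add (by linarith) (by linarith),
        ← ENNReal.ofReal_add (by linarith) (by linarith)]
      ring_nf
    calc edist x x₀ + φ x₀ y₀ + edist y₀ y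
        ≤ (edist x (x' : X) + edist (x' : X) x₀)
            + (edist x₀ (x' : X) + (edist y₀ (y' : Y) + φ x' y'))
            + (edist y₀ (y' : Y) + edist (y' : Y) y) := by
          exact add_le_add (add_le_add e1 (e2.trans (add_le_add le_rfl e3))) e4
      _ = (edist x (x' : X) + φ x' y' + edist (y' : Y) y)
            + (edist (x' : X) x₀ + edist x₀ (x' : X) + edist y₀ (y' : Y) + edist y₀ (y' : Y)) := by
          ring
      _ ≤ (edist x (x' : X) + φ x' y' + edist (y' : Y) y)
            + (ENNReal.ofReal (ε/5) + ENNReal.ofReal (ε/5) + ENNReal.ofReal (ε/5)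
              + ENNReal.ofReal (ε/5)) := by
          gcongr
      _ = _ := by rw [hc]
  calc (⨅ (x₀ : X₀) (y₀ : Y₀), edist x (x₀ : X) + φ x₀ y₀ + edist (y₀ : Y) y)
      ≤ edist x x₀ + φ x₀ y₀ + edist y₀ y :=
        iInf_le_of_le ⟨x₀, hx₀⟩ (iInf_le_of_le ⟨y₀, hy₀⟩ le_rfl)
    _ ≤ _ := step
end

section
/- Let A be a set of approximate isometries from X to Y and A^↑ = {ψ ∈ Apx(X,Y) : ∃φ ∈ A, ψ ≥ φ}. Then the closure of A^↑ (in the topology of pointwise convergence) is upward closed: if φ' lies in the closure of A^↑ and φ ≥ φ' pointwise, then φ lies in the closure of A^↑. -/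
open scoped ENNReal

lemma IsKatetov.max' {M : Type*} [PseudoMetricSpace M] {f g : M → ℝ≥0∞}
    (hf : IsKatetov f) (hg : IsKatetov g) : IsKatetov fun a => max (f a) (g a) := by
  intro a a'
  refine ⟨max_le ?_ ?_, le_trans (hf a a').2 (add_le_add le_sup_left le_sup_left)⟩
  · exact (hf a a').1.trans (add_le_add_right le_sup_left _)
  · exact (hg a a').1.trans (add_le_add_right le_sup_right _)

/-- The closure of an upward closed set of approximate isometries is upward closed. -/
theorem stmt_14 {X Y : Type*} [MetricSpace X] [MetricSpace Y]
    (A : Set (X × Y → ℝ≥0∞))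
    (hA : ∀ φ ∈ A, IsApproxIsometry fun x y => φ (x, y))
    (φ' φ : X × Y → ℝ≥0∞)
    (hφ' : φ' ∈ closure {ψ : X × Y → ℝ≥0∞ |
      IsApproxIsometry (fun x y => ψ (x, y)) ∧ ∃ θ ∈ A, θ ≤ ψ})
    (hφ : IsApproxIsometry fun x y => φ (x, y)) (hge : φ' ≤ φ) :
    φ ∈ closure {ψ : X × Y → ℝ≥0∞ |
      IsApproxIsometry (fun x y => ψ (x, y)) ∧ ∃ θ ∈ A, θ ≤ ψ} := by
  set S : Set (X × Y → ℝ≥0∞) := {ψ : X × Y → ℝ≥0∞ |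
      IsApproxIsometry (fun x y => ψ (x, y)) ∧ ∃ θ ∈ A, θ ≤ ψ} with hS
  have hF : Continuous fun ψ : X × Y → ℝ≥0∞ => fun p => max (ψ p) (φ p) :=
    continuous_pi fun p => (continuous_apply p).max continuous_const
  have hmaps : Set.MapsTo (fun ψ : X × Y → ℝ≥0∞ => fun p => max (ψ p) (φ p)) S S := by
    rintro ψ ⟨⟨h1, h2⟩, θ, hθA, hθψ⟩
    refine ⟨⟨fun y => (h1 y).max' (hφ.1 y), fun x => (h2 x).max' (hφ.2 x)⟩,
      θ, hθA, fun p => le_trans (hθψ p) le_sup_left⟩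
  have key := map_mem_closure hF hφ' hmaps
  have : (fun p => max (φ' p) (φ p)) = φ := by
    funext p
    exact max_eq_right (hge p)
  rwa [this] at key
end

section
/- Let ι₁, ι₂ : C([0,1]^p, M_n) → C([0,1]^{p'}, M_{n'}) be unital trace-preserving *-homomorphisms (with respect to a trace τ on the codomain coming from a probability measure) of the diagonal form ι_i(f) = diag[f∘t_{1,i}, …, f∘t_{k,i}] for continuous maps t_{l,i} : [0,1]^{p'} → [0,1]^p. If the diameter of the range of each t_{l,i} is less than δ, then there exists a permutation σ of {1,…,k} such that ‖t_{l,1} − t_{σ(l),2}‖_∞ < 2δ for all l. -/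
open MeasureTheory

/-- The cube `[0,1]^p`. -/
abbrev Cube (p : ℕ) : Type := Fin p → Set.Icc (0 : ℝ) 1

/-- If `ι₁, ι₂ : C([0,1]^p, M_n) → C([0,1]^{p'}, M_{n'})` are unital trace-preserving
diagonal `*`-homomorphisms `ι_i(f) = diag[f ∘ t_{1,i}, …, f ∘ t_{k,i}]` (trace preservation
with respect to the traces induced by probability measures `μ` on the codomain cube and
`ν` on the domain cube, expressed on scalar-valued functions), and the range of each
`t_{l,i}` has diameter less than `δ`, then there is a permutation `σ` with
`‖t_{l,1} − t_{σ(l),2}‖_∞ < 2δ` for all `l`. -/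
theorem stmt_16 (p p' k : ℕ)
    (μ : Measure (Cube p')) [IsProbabilityMeasure μ]
    (ν : Measure (Cube p)) [IsProbabilityMeasure ν]
    (t₁ t₂ : Fin k → C(Cube p', Cube p))
    (htr₁ : ∀ f : C(Cube p, ℝ),
      ∫ s, (∑ l : Fin k, f (t₁ l s)) / (k : ℝ) ∂μ = ∫ x, f x ∂ν)
    (htr₂ : ∀ f : C(Cube p, ℝ),
      ∫ s, (∑ l : Fin k, f (t₂ l s)) / (k : ℝ) ∂μ = ∫ x, f x ∂ν)
    (δ : ℝ)
    (hdiam₁ : ∀ l, Metric.diam (Set.range (t₁ l)) < δ)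
    (hdiam₂ : ∀ l, Metric.diam (Set.range (t₂ l)) < δ) :
    ∃ σ : Equiv.Perm (Fin k), ∀ l, dist (t₁ l) (t₂ (σ l)) < 2 * δ := by
  classical
  rcases Nat.eq_zero_or_pos k with hk | hk
  · subst hk; exact ⟨1, fun l => l.elim0⟩
  have hkR : (0 : ℝ) < k := by exact_mod_cast hk
  have hδ : 0 < δ := lt_of_le_of_lt Metric.diam_nonneg (hdiam₁ ⟨0, hk⟩)
  set N : Fin k → Finset (Fin k) := fun l =>
    Finset.univ.filter fun l' => (Set.range (t₁ l) ∩ Set.range (t₂ l')).Nonempty with hN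
  have hall : ∀ S : Finset (Fin k), S.card ≤ (S.biUnion N).card := by
    intro S
    set T : Finset (Fin k) := S.biUnion N with hT
    set K₁ : Set (Cube p) := ⋃ l ∈ S, Set.range (t₁ l) with hK₁def
    set K₂ : Set (Cube p) := ⋃ l' ∈ (Finset.univ \ T), Set.range (t₂ l') with hK₂def
    have hK₁ : IsClosed K₁ :=
      Set.Finite.isClosed_biUnion S.finite_toSet
        (fun l _ => (isCompact_range (t₁ l).continuous).isClosed)
    have hK₂ : IsClosed K₂ :=
      Set.Finite.isClosed_biUnion (Finset.univ \ T).finite_toSet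
        (fun l _ => (isCompact_range (t₂ l).continuous).isClosed)
    have hdisj : Disjoint K₂ K₁ := by
      rw [Set.disjoint_right]
      rintro x hx₁ hx₂
      simp only [hK₁def, hK₂def, Set.mem_iUnion, exists_prop] at hx₁ hx₂
      obtain ⟨l, hlS, hxl⟩ := hx₁
      obtain ⟨l', hl'⟩ := hx₂
      have : l' ∈ N l := by
        simp only [hN, Finset.mem_filter, Finset.mem_univ, true_and]
        exact ⟨x, hxl, hl'.2⟩
      have hmem : l' ∈ T := Finset.mem_biUnion.mpr ⟨l, hlS, this⟩
      have := hl'.1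
      simp [Finset.mem_sdiff] at this
      exact this hmem
    obtain ⟨f, hf0, hf1, hf01⟩ := exists_continuous_zero_one_of_isClosed hK₂ hK₁ hdisj
    have hint₁ : Integrable (fun s => (∑ l : Fin k, f (t₁ l s)) / (k : ℝ)) μ := by
      apply Continuous.integrable_of_hasCompactSupport
      · exact (continuous_finset_sum _ fun l _ =>
          f.continuous.comp (t₁ l).continuous).div_const _
      · exact HasCompactSupport.of_compactSpace _
    have hint₂ : Integrable (fun s => (∑ l : Fin k, f (t₂ l s)) / (k : ℝ)) μ := by
      apply Continuous.integrable_of_hasCompactSupport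
      · exact (continuous_finset_sum _ fun l _ =>
          f.continuous.comp (t₂ l).continuous).div_const _
      · exact HasCompactSupport.of_compactSpace _
    have hlow : (S.card : ℝ) / k ≤ ∫ x, f x ∂ν := by
      rw [← htr₁ f]
      have : ∫ _ : Cube p', (S.card : ℝ) / k ∂μ = (S.card : ℝ) / k := by
        simp [integral_const]
      rw [← this]
      apply integral_mono (integrable_const _) hint₁
      intro s
      have hsum : (S.card : ℝ) ≤ ∑ l : Fin k, f (t₁ l s) := by
        have h1 : ∑ l ∈ S, f (t₁ l s) = (S.card : ℝ) := by
          rw [Finset.sum_congr rfl fun l hl =>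
            show f (t₁ l s) = 1 from hf1 (Set.mem_biUnion hl (Set.mem_range_self s))]
          simp
        rw [← h1]
        exact Finset.sum_le_sum_of_subset_of_nonneg (Finset.subset_univ S)
          (fun l _ _ => (hf01 (t₁ l s)).1)
      exact div_le_div_of_nonneg_right hsum hkR.le
    have hhigh : ∫ x, f x ∂ν ≤ (T.card : ℝ) / k := by
      rw [← htr₂ f]
      have : ∫ _ : Cube p', (T.card : ℝ) / k ∂μ = (T.card : ℝ) / k := by
        simp [integral_const]
      rw [← this]
      apply integral_mono hint₂ (integrable_const _)
      intro s
      have hsum : ∑ l : Fin k, f (t₂ l s) ≤ (T.card : ℝ) := by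
        rw [← Finset.sum_sdiff (Finset.subset_univ T)]
        have h0 : ∑ l ∈ Finset.univ \ T, f (t₂ l s) = 0 := by
          apply Finset.sum_eq_zero
          intro l hl
          have : t₂ l s ∈ K₂ := Set.mem_biUnion hl (Set.mem_range_self s)
          exact hf0 this
        have h1 : ∑ l ∈ T, f (t₂ l s) ≤ (T.card : ℝ) := by
          calc ∑ l ∈ T, f (t₂ l s) ≤ ∑ _l ∈ T, (1 : ℝ) :=
                Finset.sum_le_sum fun l _ => (hf01 (t₂ l s)).2
            _ = (T.card : ℝ) := by simp
        rw [h0, zero_add]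
        exact h1
      exact div_le_div_of_nonneg_right hsum hkR.le
    have : (S.card : ℝ) / k ≤ (T.card : ℝ) / k := hlow.trans hhigh
    have : (S.card : ℝ) ≤ (T.card : ℝ) := by
      exact (div_le_div_iff_of_pos_right hkR).mp this
    exact_mod_cast this
  obtain ⟨g, hginj, hgmem⟩ :=
    (Finset.all_card_le_biUnion_card_iff_exists_injective N).mp hall
  refine ⟨Equiv.ofBijective g (Finite.injective_iff_bijective.mp hginj), fun l => ?_⟩
  have hmem := hgmem l
  simp only [hN, Finset.mem_filter, Finset.mem_univ, true_and] at hmem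
  obtain ⟨x, hx₁, hx₂⟩ := hmem
  rw [ContinuousMap.dist_lt_iff (by linarith : (0:ℝ) < 2 * δ)]
  intro s
  have hb₁ : Bornology.IsBounded (Set.range (t₁ l)) :=
    (isCompact_range (t₁ l).continuous).isBounded
  have hb₂ : Bornology.IsBounded (Set.range (t₂ (g l))) :=
    (isCompact_range (t₂ (g l)).continuous).isBounded
  have d₁ : dist (t₁ l s) x ≤ Metric.diam (Set.range (t₁ l)) :=
    Metric.dist_le_diam_of_mem hb₁ (Set.mem_range_self s) hx₁
  have d₂ : dist x (t₂ (g l) s) ≤ Metric.diam (Set.range (t₂ (g l))) :=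
    Metric.dist_le_diam_of_mem hb₂ hx₂ (Set.mem_range_self s)
  have := dist_triangle (t₁ l s) x (t₂ (g l) s)
  have h1 := hdiam₁ l
  have h2 := hdiam₂ (g l)
  calc dist (t₁ l s) ((t₂ (g l)) s) ≤ dist (t₁ l s) x + dist x (t₂ (g l) s) := this
    _ < 2 * δ := by linarith
end
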